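/- Let (G, D_G) be a Dirac Lie group. Then D_G(e) = g₀ × p₁, where g₀ = {x ∈ g | (x,0) ∈ D_G(e)} and p₁ = {ξ ∈ g* | ∃x, (x,ξ) ∈ D_G(e)}. Consequently, for any two sections (X,α) and (Y,β) of D_G defined near e, α_e(Y(e)) = 0 = β_e(X(e)). -/

import Mathlib

open scoped Manifold
noncomputable section
namespace DiracPaper

section LagrGen
variable {V : Type*} [NormedAddCommGroup V] [NormedSpace ℝ V]

/-- A subspace of `V ⊕ V*` is Lagrangian if it coincides with its orthogonal for the
canonical pairing `⟨(x,ξ),(y,η)⟩ = ξ(y) + η(x)`. -/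
def IsLagr (D : Submodule ℝ (V × (V →L[ℝ] ℝ))) : Prop :=
  ∀ p : V × (V →L[ℝ] ℝ), p ∈ D ↔ ∀ q ∈ D, p.2 q.1 + q.2 p.1 = 0

end LagrGen

variable {E : Type*} [NormedAddCommGroup E] [NormedSpace ℝ E]
variable {G : Type*} [TopologicalSpace G] [ChartedSpace E G] [Group G] [LieGroup 𝓘(ℝ, E) (⊤ : ℕ∞) G]

/-- The differential of left translation `L_g` at the point `h` (all tangent spaces being
identified with the model space `E`). -/
def dL (g h : G) : E →L[ℝ] E := mfderiv 𝓘(ℝ, E) 𝓘(ℝ, E) (fun x => g * x) h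

/-- The differential of right translation `R_h` at the point `g`. -/
def dR (h g : G) : E →L[ℝ] E := mfderiv 𝓘(ℝ, E) 𝓘(ℝ, E) (fun x => x * h) g

/-- The differential at the neutral element of a real valued function on `G`. -/
def d1 (f : G → ℝ) : E →L[ℝ] ℝ := mfderiv 𝓘(ℝ, E) 𝓘(ℝ, ℝ) f (1 : G)

/-- The left invariant vector field associated to `x ∈ 𝔤 = T_e G`. -/
def xL (x : E) (g : G) : E := dL g 1 x

/-- The left invariant one-form associated to `ξ ∈ 𝔤*`: `ξ^L(g) = (T_g L_{g⁻¹})^* ξ`. -/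
def leftForm (ξ : E →L[ℝ] ℝ) (g : G) : E →L[ℝ] ℝ := ξ.comp (dL g⁻¹ g)

/-- The right invariant one-form associated to `ξ ∈ 𝔤*`: `ξ^R(g) = (T_g R_{g⁻¹})^* ξ`. -/
def rightForm (ξ : E →L[ℝ] ℝ) (g : G) : E →L[ℝ] ℝ := ξ.comp (dR g⁻¹ g)

/-- The adjoint action of `G` on `𝔤 = T_e G`. -/
def Ad (g : G) : E →L[ℝ] E := mfderiv 𝓘(ℝ, E) 𝓘(ℝ, E) (fun x => g * x * g⁻¹) 1

variable (G) in
/-- The adjoint action of `𝔤` on itself, obtained by differentiating `Ad` at `e`;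
`adCLM G x y = ⁅x, y⁆`. -/
def adCLM : E →L[ℝ] E →L[ℝ] E :=
  mfderiv 𝓘(ℝ, E) 𝓘(ℝ, E →L[ℝ] E) (Ad : G → (E →L[ℝ] E)) 1

variable (G) in
/-- The Lie bracket on `𝔤 = T_e G`. -/
def bra (x y : E) : E := adCLM G x y

variable (G) in
/-- The coadjoint action: `(coadW G x ξ) y = ξ ⁅y, x⁆`, i.e. `ad_x^* ξ`. -/
def coadW (x : E) (ξ : E →L[ℝ] ℝ) : E →L[ℝ] ℝ := ξ.comp ((adCLM G).flip x)


/-- Multiplicativity of a field of subspaces `D(g) ⊆ T_g G ⊕ T_g^* G`: group multiplication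
is a forward Dirac map. -/
def MultDirac (D : G → Submodule ℝ (E × (E →L[ℝ] ℝ))) : Prop :=
  ∀ g h : G, ∀ p ∈ D (g * h), ∃ w u : E, ∃ β γ : E →L[ℝ] ℝ,
    (w, β) ∈ D g ∧ (u, γ) ∈ D h ∧ dR h g w + dL g h u = p.1 ∧
    β = p.2.comp (dR h g) ∧ γ = p.2.comp (dL g h)

/-- `𝔤₀ = G₀(e)`, the kernel of the Dirac structure at the neutral element. -/
def g0set (D : G → Submodule ℝ (E × (E →L[ℝ] ℝ))) : Set E := {x | (x, 0) ∈ D 1}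

/-- `𝔭₁ = P₁(e)`, the characteristic codistribution at the neutral element. -/
def p1set (D : G → Submodule ℝ (E × (E →L[ℝ] ℝ))) : Set (E →L[ℝ] ℝ) :=
  {ξ | ∃ x, (x, ξ) ∈ D 1}

/-- A smooth vector field `X = X_ξ` such that `(X_ξ, ξ^L)` is a section of `D`. -/
def SmoothSec (D : G → Submodule ℝ (E × (E →L[ℝ] ℝ))) (ξ : E →L[ℝ] ℝ) (X : G → E) : Prop :=
  ContMDiff 𝓘(ℝ, E) 𝓘(ℝ, E) (⊤ : ℕ∞) X ∧ ∀ g, (X g, leftForm ξ g) ∈ D g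

/-- `p1br η X_ξ = [ξ, η] = d_e (η^L (X_ξ))`, the bracket of `ξ, η ∈ 𝔭₁` computed with a
choice of vector field `X_ξ`. -/
def p1br (η : E →L[ℝ] ℝ) (X : G → E) : E →L[ℝ] ℝ := d1 (fun g => leftForm η g (X g))

/-- `z ∈ 𝔤` represents `ad_η^* x ∈ 𝔤/𝔤₀ = 𝔭₁^*`, which is defined by
`(ad_η^* x)(θ) = [θ, η](x)`. -/
def RepAdStar (D : G → Submodule ℝ (E × (E →L[ℝ] ℝ))) (η : E →L[ℝ] ℝ) (x z : E) : Prop :=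
  ∀ θ ∈ p1set D, ∀ Xθ : G → E, SmoothSec D θ Xθ → θ z = p1br η Xθ x

/-- A one-parameter subgroup `c` of `G` with derivative `x` at `0` (playing the role of
`t ↦ exp (t x)`). -/
def OneParam (c : ℝ → G) (x : E) : Prop :=
  ContMDiff 𝓘(ℝ, ℝ) 𝓘(ℝ, E) (⊤ : ℕ∞) c ∧ c 0 = 1 ∧ (∀ s t : ℝ, c (s + t) = c s * c t) ∧
    (id (mfderiv 𝓘(ℝ, ℝ) 𝓘(ℝ, E) c 0 (1 : ℝ)) : E) = x

section Courant

variable {F : Type*} [NormedAddCommGroup F] [NormedSpace ℝ F]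
variable {M : Type*} [TopologicalSpace M] [ChartedSpace F M]

/-- The Lie bracket of two vector fields, computed in the trivialization of the tangent
bundle given by the identification `TangentSpace 𝓘(ℝ,F) m = F`. -/
def vLie (X Y : M → F) (m : M) : F :=
  (id (mfderiv 𝓘(ℝ, F) 𝓘(ℝ, F) Y m (X m)) : F) -
    (id (mfderiv 𝓘(ℝ, F) 𝓘(ℝ, F) X m (Y m)) : F)

/-- The Lie derivative `£_X β` of a one-form `β` along a vector field `X`, in the same
trivialization. -/
def lieDform (X : M → F) (β : M → (F →L[ℝ] ℝ)) (m : M) : F →L[ℝ] ℝ :=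
  (id (mfderiv 𝓘(ℝ, F) 𝓘(ℝ, F →L[ℝ] ℝ) β m (X m)) : F →L[ℝ] ℝ) +
    (β m).comp (id (mfderiv 𝓘(ℝ, F) 𝓘(ℝ, F) X m) : F →L[ℝ] F)

/-- The contraction `i_Y dα`, in the same trivialization. -/
def iotaDform (Y : M → F) (α : M → (F →L[ℝ] ℝ)) (m : M) : F →L[ℝ] ℝ :=
  (id (mfderiv 𝓘(ℝ, F) 𝓘(ℝ, F →L[ℝ] ℝ) α m (Y m)) : F →L[ℝ] ℝ) -
    (id (mfderiv 𝓘(ℝ, F) 𝓘(ℝ, F →L[ℝ] ℝ) α m) : F →L[ℝ] (F →L[ℝ] ℝ)).flip (Y m)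

/-- Integrability of a Dirac structure: closure of the space of smooth sections under the
Courant–Dorfman bracket `[(X,α),(Y,β)] = ([X,Y], £_X β − i_Y dα)`. -/
def CourantClosed (D : M → Submodule ℝ (F × (F →L[ℝ] ℝ))) : Prop :=
  ∀ (X Y : M → F) (α β : M → (F →L[ℝ] ℝ)),
    ContMDiff 𝓘(ℝ, F) 𝓘(ℝ, F) (⊤ : ℕ∞) X → ContMDiff 𝓘(ℝ, F) 𝓘(ℝ, F →L[ℝ] ℝ) (⊤ : ℕ∞) α →
    ContMDiff 𝓘(ℝ, F) 𝓘(ℝ, F) (⊤ : ℕ∞) Y → ContMDiff 𝓘(ℝ, F) 𝓘(ℝ, F →L[ℝ] ℝ) (⊤ : ℕ∞) β →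
    (∀ m, (X m, α m) ∈ D m) → (∀ m, (Y m, β m) ∈ D m) →
    ∀ m, (vLie X Y m, lieDform X β m - iotaDform Y α m) ∈ D m

end Courant

/-
At the identity, the Pontryagin groupoid composes only pairs over the same covector,
`(w, ξ) ⋆ (u, ξ) = (w + u, ξ)`, and multiplicativity says that every element of `D(e)` is such
a product of elements of `D(e)`. Pairing both factors and the product with a second element of
`D(e)` and using isotropy gives `ξ(y) = 0` for all `(x, ξ), (y, η) ∈ D(e)`. Hence `(0, ξ)` pairs
to zero with `D(e)`, so lies in `D(e)` by maximality, and `D(e)` splits as `𝔤₀ × 𝔭₁`.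
-/

theorem Submodule.mem_iff_of_mk_zero_snd_mem {R M N : Type*} [Ring R] [AddCommGroup M]
    [Module R M] [AddCommGroup N] [Module R N] {L : Submodule R (M × N)}
    (hunit : ∀ p ∈ L, ((0 : M), p.2) ∈ L) (p : M × N) :
    p ∈ L ↔ (p.1, (0 : N)) ∈ L ∧ ∃ x, (x, p.2) ∈ L := by
  obtain ⟨x, ξ⟩ := p
  constructor
  · intro hp
    refine ⟨?_, x, hp⟩
    simpa using L.sub_mem hp (hunit _ hp)
  · rintro ⟨hfst, y, hy⟩
    simpa using L.add_mem hfst (hunit _ hy)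

section Lagrangian

variable {V : Type*} [NormedAddCommGroup V] [NormedSpace ℝ V] {L : Submodule ℝ (V × (V →L[ℝ] ℝ))}

theorem IsLagr.snd_apply_fst_eq_zero (hL : IsLagr L)
    (hsplit : ∀ p ∈ L, ∃ w u, (w, p.2) ∈ L ∧ (u, p.2) ∈ L ∧ w + u = p.1)
    {p q : V × (V →L[ℝ] ℝ)} (hp : p ∈ L) (hq : q ∈ L) : p.2 q.1 = 0 := by
  obtain ⟨w, u, hw, hu, hsum⟩ := hsplit p hp
  have hpw : p.2 q.1 + q.2 w = 0 := (hL _).mp hw q hq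
  have hpu : p.2 q.1 + q.2 u = 0 := (hL _).mp hu q hq
  have hpq : p.2 q.1 + q.2 p.1 = 0 := (hL p).mp hp q hq
  rw [← hsum, map_add] at hpq
  linarith

theorem IsLagr.mk_zero_snd_mem (hL : IsLagr L)
    (hsplit : ∀ p ∈ L, ∃ w u, (w, p.2) ∈ L ∧ (u, p.2) ∈ L ∧ w + u = p.1)
    {p : V × (V →L[ℝ] ℝ)} (hp : p ∈ L) : ((0 : V), p.2) ∈ L :=
  (hL _).mpr fun _ hq => by simpa using hL.snd_apply_fst_eq_zero hsplit hp hq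

end Lagrangian

omit [LieGroup 𝓘(ℝ, E) (⊤ : ℕ∞) G] in
theorem dL_one (h : G) : dL (1 : G) h = ContinuousLinearMap.id ℝ E := by
  rw [dL, show (fun x : G => 1 * x) = id from funext one_mul, mfderiv_id]
  rfl

omit [LieGroup 𝓘(ℝ, E) (⊤ : ℕ∞) G] in
theorem dR_one (g : G) : dR (1 : G) g = ContinuousLinearMap.id ℝ E := by
  rw [dR, show (fun x : G => x * 1) = id from funext mul_one, mfderiv_id]
  rfl

omit [LieGroup 𝓘(ℝ, E) (⊤ : ℕ∞) G] in
theorem MultDirac.exists_add_eq_of_mem_one {D : G → Submodule ℝ (E × (E →L[ℝ] ℝ))}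
    (hMult : MultDirac D) {p : E × (E →L[ℝ] ℝ)} (hp : p ∈ D 1) :
    ∃ w u, (w, p.2) ∈ D 1 ∧ (u, p.2) ∈ D 1 ∧ w + u = p.1 := by
  obtain ⟨w, u, β, γ, hw, hu, hsum, rfl, rfl⟩ := hMult 1 1 p (by rwa [one_mul])
  rw [dR_one, ContinuousLinearMap.comp_id] at hw
  rw [dL_one, ContinuousLinearMap.comp_id] at hu
  rw [dR_one, dL_one] at hsum
  exact ⟨w, u, hw, hu, hsum⟩

theorem dirac_lie_group_fiber_at_identity
    (D : G → Submodule ℝ (E × (E →L[ℝ] ℝ)))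
    (hLag : ∀ g : G, IsLagr (D g)) (hMult : MultDirac D) :
    (∀ p : E × (E →L[ℝ] ℝ), p ∈ D 1 ↔ p.1 ∈ g0set D ∧ p.2 ∈ p1set D) ∧
    (∀ U : Set G, U ∈ nhds (1 : G) →
      ∀ (X Y : G → E) (α β : G → (E →L[ℝ] ℝ)),
        (∀ g ∈ U, (X g, α g) ∈ D g) → (∀ g ∈ U, (Y g, β g) ∈ D g) →
        α 1 (Y 1) = 0 ∧ β 1 (X 1) = 0) := by
  have hsplit := fun p (hp : p ∈ D 1) => hMult.exists_add_eq_of_mem_one hp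
  refine ⟨Submodule.mem_iff_of_mk_zero_snd_mem fun p hp => (hLag 1).mk_zero_snd_mem hsplit hp,
    fun U hU X Y α β hXα hYβ => ?_⟩
  have hX := hXα 1 (mem_of_mem_nhds hU)
  have hY := hYβ 1 (mem_of_mem_nhds hU)
  exact ⟨(hLag 1).snd_apply_fst_eq_zero hsplit hX hY, (hLag 1).snd_apply_fst_eq_zero hsplit hY hX⟩

end DiracPaper
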